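/- arXiv:2403.12006 — 3 statements merged into one kernel-verified Lean document; each statement's English description precedes it below -/
import Mathlib

section
/- Let P ∈ ℝ^{m×p}, S ∈ {0,1}^{m×p} with S^c = 𝟙_{m×p} − S, and λ < 0. Assume S ∘ P ≠ 0. Then the minimum Frobenius norm of Δ ∈ ℝ^{m×p} subject to λ + 𝟙ₘᵀ(P ∘ Δ)𝟙ₚ = 0 and S^c ∘ Δ = 0 equals −λ / ‖S ∘ P‖_F, and it is attained at Δ* = −λ (S ∘ P) / ‖S ∘ P‖_F². -/
open Matrix BigOperators

noncomputable def frobNorm {m p : ℕ} (A : Matrix (Fin m) (Fin p) ℝ) : ℝ :=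
  Real.sqrt (∑ i, ∑ j, (A i j) ^ 2)

def onesVec (n : ℕ) : Fin n → ℝ := fun _ => 1

/-- 𝟙ₘᵀ A 𝟙ₚ : sum of all entries of A. -/
noncomputable def sumEntries {m p : ℕ} (A : Matrix (Fin m) (Fin p) ℝ) : ℝ :=
  onesVec m ⬝ᵥ (A *ᵥ onesVec p)

/-- S is a 0-1 (binary) matrix. -/
def IsBinary {m p : ℕ} (S : Matrix (Fin m) (Fin p) ℝ) : Prop :=
  ∀ i j, S i j = 0 ∨ S i j = 1

/-- complement Sᶜ = 𝟙_{m×p} − S of a binary matrix. -/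
def compl' {m p : ℕ} (S : Matrix (Fin m) (Fin p) ℝ) : Matrix (Fin m) (Fin p) ℝ :=
  Matrix.of fun i j => 1 - S i j

lemma sumEntries_eq {m p : ℕ} (A : Matrix (Fin m) (Fin p) ℝ) :
    sumEntries A = ∑ i, ∑ j, A i j := by
  simp [sumEntries, onesVec, dotProduct, Matrix.mulVec]

lemma frob_sq {m p : ℕ} (A : Matrix (Fin m) (Fin p) ℝ) :
    frobNorm A ^ 2 = ∑ i, ∑ j, (A i j) ^ 2 := by
  rw [frobNorm, Real.sq_sqrt]
  positivity

lemma frob_nonneg {m p : ℕ} (A : Matrix (Fin m) (Fin p) ℝ) : 0 ≤ frobNorm A :=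
  Real.sqrt_nonneg _

/-- Closed-form minimum for the linearized single-eigenvalue stability radius subproblem. -/
theorem sr_la_single_eig_min {m p : ℕ} (P S : Matrix (Fin m) (Fin p) ℝ)
    (hS : IsBinary S) (lam : ℝ) (hlam : lam < 0) (hSP : S.hadamard P ≠ 0) :
    IsLeast {r : ℝ | ∃ Δ : Matrix (Fin m) (Fin p) ℝ, r = frobNorm Δ ∧
        lam + sumEntries (P.hadamard Δ) = 0 ∧ (compl' S).hadamard Δ = 0}
      (-lam / frobNorm (S.hadamard P)) ∧
    (frobNorm (((-lam) / (frobNorm (S.hadamard P)) ^ 2) • S.hadamard P)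
        = -lam / frobNorm (S.hadamard P) ∧
      lam + sumEntries (P.hadamard (((-lam) / (frobNorm (S.hadamard P)) ^ 2) • S.hadamard P)) = 0 ∧
      (compl' S).hadamard (((-lam) / (frobNorm (S.hadamard P)) ^ 2) • S.hadamard P) = 0) := by
  set Q := S.hadamard P with hQ
  set N := frobNorm Q with hN
  set c := (-lam) / N ^ 2 with hc
  -- T := sum of squares of Q
  have hT : N ^ 2 = ∑ i, ∑ j, (Q i j) ^ 2 := frob_sq Q
  have hTpos : 0 < N ^ 2 := by
    rw [hT]
    have h0 : ∃ i j, Q i j ≠ 0 := by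
      by_contra h
      push_neg at h
      exact hSP (by ext i j; exact h i j)
    obtain ⟨i, j, hij⟩ := h0
    have h1 : 0 < (Q i j) ^ 2 := by positivity
    calc 0 < (Q i j)^2 := h1
      _ ≤ ∑ j', (Q i j')^2 :=
        Finset.single_le_sum (f := fun j' => (Q i j') ^ 2)
          (fun j' _ => sq_nonneg _) (Finset.mem_univ j)
      _ ≤ ∑ i', ∑ j', (Q i' j')^2 :=
        Finset.single_le_sum (f := fun i' => ∑ j', (Q i' j') ^ 2)
          (fun i' _ => Finset.sum_nonneg fun j' _ => sq_nonneg _)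
          (Finset.mem_univ i)
  have hN0 : 0 ≤ N := hN ▸ frob_nonneg Q
  have hNpos : 0 < N :=
    lt_of_le_of_ne hN0 (fun h => by rw [← h] at hTpos; simp at hTpos)
  -- key: for binary S, P ij * Q ij = (Q ij)^2, and (1 - S ij) * Q ij = 0
  have hPQ : ∀ i j, P i j * Q i j = (Q i j) ^ 2 := by
    intro i j
    rcases hS i j with h | h <;> simp [hQ, Matrix.hadamard, h] <;> ring
  have hSQ : ∀ i j, (1 - S i j) * Q i j = 0 := by
    intro i j
    rcases hS i j with h | h <;> simp [hQ, Matrix.hadamard, h]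
  -- properties of the candidate optimizer
  have hfrob : frobNorm (c • Q) = -lam / N := by
    have hcpos : 0 ≤ c := by
      rw [hc]
      apply div_nonneg (by linarith) (by positivity)
    have : frobNorm (c • Q) = c * N := by
      rw [frobNorm, hN, frobNorm]
      have : ∀ i j, ((c • Q) i j) ^ 2 = c ^ 2 * (Q i j) ^ 2 := by
        intro i j; simp [Matrix.smul_apply]; ring
      simp_rw [this, ← Finset.mul_sum]
      rw [Real.sqrt_mul (by positivity), Real.sqrt_sq hcpos]
    rw [this, hc]
    field_simp
  have hcons : lam + sumEntries (P.hadamard (c • Q)) = 0 := by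
    rw [sumEntries_eq]
    have : ∀ i j, (P.hadamard (c • Q)) i j = c * (Q i j) ^ 2 := by
      intro i j
      simp only [Matrix.hadamard_apply, Matrix.smul_apply, smul_eq_mul]
      rw [mul_comm (P i j), mul_assoc, mul_comm (Q i j), hPQ]
    simp_rw [this, ← Finset.mul_sum, ← hT, hc]
    field_simp
    ring
  have hcompl : (compl' S).hadamard (c • Q) = 0 := by
    ext i j
    simp only [Matrix.hadamard_apply, compl', Matrix.of_apply, Matrix.smul_apply,
      smul_eq_mul, Matrix.zero_apply]
    rw [mul_comm c, ← mul_assoc, hSQ]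
    ring
  refine ⟨⟨⟨c • Q, hfrob.symm, hcons, hcompl⟩, ?_⟩, hfrob, hcons, hcompl⟩
  -- lower bound
  rintro r ⟨Δ, rfl, hc1, hc2⟩
  have hΔS : ∀ i j, Δ i j = S i j * Δ i j := by
    intro i j
    rcases hS i j with h | h
    · have h2 := congrFun (congrFun hc2 i) j
      simp only [Matrix.hadamard_apply, compl', Matrix.of_apply, Matrix.zero_apply, h] at h2
      have hz : Δ i j = 0 := by linarith
      simp [h, hz]
    · simp [h]
  have hsum : ∑ i, ∑ j, Q i j * Δ i j = -lam := by
    rw [sumEntries_eq] at hc1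
    have : ∀ i j, Q i j * Δ i j = (P.hadamard Δ) i j := by
      intro i j
      simp only [Matrix.hadamard_apply, hQ]
      rw [hΔS i j]
      rcases hS i j with h | h <;> rw [h] <;> ring
    simp_rw [this]
    linarith
  -- Cauchy–Schwarz over the product type
  have hCS : (∑ i, ∑ j, Q i j * Δ i j) ^ 2 ≤
      (∑ i, ∑ j, (Q i j) ^ 2) * (∑ i, ∑ j, (Δ i j) ^ 2) := by
    have h2 := Finset.sum_mul_sq_le_sq_mul_sq (Finset.univ : Finset (Fin m × Fin p))
      (fun x => Q x.1 x.2) (fun x => Δ x.1 x.2)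
    rw [Fintype.sum_prod_type, Fintype.sum_prod_type, Fintype.sum_prod_type] at h2
    exact h2
  rw [hsum, ← hT] at hCS
  have hΔ2 : frobNorm Δ ^ 2 = ∑ i, ∑ j, (Δ i j) ^ 2 := frob_sq Δ
  rw [← hΔ2] at hCS
  have hnl : 0 < -lam := by linarith
  rw [div_le_iff₀ hNpos]
  nlinarith [frob_nonneg Δ, mul_nonneg (frob_nonneg Δ) hNpos.le,
    sq_nonneg (frobNorm Δ * N + lam)]
end

section
/- Let P ∈ ℝ^{m×p}, S binary, λ < 0, S ∘ P ≠ 0, and let Δ be any feasible point: λ + 𝟙ₘᵀ(P ∘ Δ)𝟙ₚ = 0 and S^c ∘ Δ = 0. Then ‖Δ‖_F ≥ −λ/‖S ∘ P‖_F, with equality iff Δ = −λ(S ∘ P)/‖S ∘ P‖_F². -/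
open Matrix BigOperators

/-- Lower bound and uniqueness of the minimizer of the linearized SR subproblem. -/
theorem sr_la_lower_bound_unique {m p : ℕ} (P S : Matrix (Fin m) (Fin p) ℝ)
    (hS : IsBinary S) (lam : ℝ) (hlam : lam < 0) (hSP : S.hadamard P ≠ 0)
    (Δ : Matrix (Fin m) (Fin p) ℝ)
    (hfeas1 : lam + sumEntries (P.hadamard Δ) = 0)
    (hfeas2 : (compl' S).hadamard Δ = 0) :
    -lam / frobNorm (S.hadamard P) ≤ frobNorm Δ ∧
    (frobNorm Δ = -lam / frobNorm (S.hadamard P) ↔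
      Δ = ((-lam) / (frobNorm (S.hadamard P)) ^ 2) • S.hadamard P) := by
  classical
  set A := S.hadamard P with hA
  have hpt : ∀ i j, A i j * Δ i j = P i j * Δ i j := by
    intro i j
    rcases hS i j with h | h
    · have h0 : Δ i j = 0 := by
        have h2 := congrFun (congrFun hfeas2 i) j
        simpa [compl', Matrix.hadamard_apply, h] using h2
      simp [hA, Matrix.hadamard_apply, h0]
    · simp [hA, Matrix.hadamard_apply, h]
  let x : EuclideanSpace ℝ (Fin m × Fin p) := WithLp.toLp 2 (fun q : Fin m × Fin p => A q.1 q.2)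
  let y : EuclideanSpace ℝ (Fin m × Fin p) := WithLp.toLp 2 (fun q : Fin m × Fin p => Δ q.1 q.2)
  have hnx : ‖x‖ = frobNorm A := by
    simp [EuclideanSpace.norm_eq, frobNorm, Real.norm_eq_abs, sq_abs,
      Fintype.sum_prod_type, x]
  have hny : ‖y‖ = frobNorm Δ := by
    simp [EuclideanSpace.norm_eq, frobNorm, Real.norm_eq_abs, sq_abs,
      Fintype.sum_prod_type, y]
  have hinner : (inner ℝ x y : ℝ) = -lam := by
    have hsum : sumEntries (P.hadamard Δ) = -lam := by linarith
    have : (inner ℝ x y : ℝ) = ∑ i, ∑ j, A i j * Δ i j := by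
      simp [PiLp.inner_apply, RCLike.inner_apply, Fintype.sum_prod_type, x, y, mul_comm]
    rw [this]
    rw [← hsum]
    simp [sumEntries, onesVec, dotProduct, mulVec, Matrix.hadamard_apply, hpt]
  have hxne : x ≠ 0 := by
    intro h
    apply hSP
    ext i j
    have := congrArg (fun v : EuclideanSpace ℝ (Fin m × Fin p) => v (i, j)) h
    simpa [x] using this
  have hnxpos : 0 < ‖x‖ := norm_pos_iff.mpr hxne
  have hcs : -lam ≤ ‖x‖ * ‖y‖ := hinner ▸ real_inner_le_norm x y
  have hlb : -lam / frobNorm A ≤ frobNorm Δ := by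
    rw [← hnx, ← hny]
    rw [div_le_iff₀ hnxpos]
    linarith [hcs, mul_comm ‖x‖ ‖y‖]
  refine ⟨hlb, ?_, ?_⟩
  · intro heq
    have hny' : ‖y‖ = -lam / ‖x‖ := by rw [hny, hnx]; exact heq
    have heqi : (inner ℝ x y : ℝ) = ‖x‖ * ‖y‖ := by
      rw [hinner, hny', mul_div_cancel₀ _ (ne_of_gt hnxpos)]
    have hpar := (inner_eq_norm_mul_iff_real).mp heqi
    -- ‖y‖ • x = ‖x‖ • y
    have hyeq : y = (‖y‖ / ‖x‖) • x := by
      have h3 : (‖x‖⁻¹ : ℝ) • (‖y‖ • x) = ‖x‖⁻¹ • (‖x‖ • y) := by rw [hpar]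
      rw [smul_smul, smul_smul, inv_mul_cancel₀ (ne_of_gt hnxpos), one_smul] at h3
      rw [div_eq_inv_mul]
      exact h3.symm
    have hc : ‖y‖ / ‖x‖ = -lam / ‖x‖ ^ 2 := by
      rw [hny', div_div, sq]
    rw [hc, hnx] at hyeq
    ext i j
    have := congrArg (fun v : EuclideanSpace ℝ (Fin m × Fin p) => v (i, j)) hyeq
    simpa [x, y, Matrix.smul_apply, smul_eq_mul] using this
  · intro hΔ
    have hfpos : 0 < frobNorm A := hnx ▸ hnxpos
    have hyx : y = ((-lam) / (frobNorm A) ^ 2) • x := by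
      ext q
      have := congrFun (congrFun hΔ q.1) q.2
      simpa [x, y, Matrix.smul_apply, smul_eq_mul] using this
    have hcpos : 0 < (-lam) / (frobNorm A) ^ 2 := by
      apply div_pos (by linarith) (by positivity)
    rw [← hny, hyx, norm_smul, Real.norm_eq_abs, abs_of_pos hcpos, hnx]
    field_simp [hfpos.ne']
end

section
/- Let λ < 0 and P, S as above with S ∘ P ≠ 0. If −λ₁/‖S ∘ P₁‖_F ≤ −λ₂/‖S ∘ P₂‖_F for two eigenvalue data (λ₁,P₁), (λ₂,P₂), then the minimum-norm sparsity-constrained perturbation shifting the joint maximum max_k (λ_k + 𝟙ᵀ(P_k ∘ Δ)𝟙) to zero has Frobenius norm at most −λ₁/‖S ∘ P₁‖_F. -/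
open Matrix BigOperators

/-- SR_la as a min over single-eigenvalue closed forms: the minimum norm of a
sparsity-constrained perturbation shifting the joint maximum to zero is at most
the smaller of the single-eigenvalue closed-form values. -/
theorem sr_la_min_over_eigs {m p : ℕ} (P₁ P₂ S : Matrix (Fin m) (Fin p) ℝ)
    (hS : IsBinary S) (lam₁ lam₂ : ℝ) (hlam₁ : lam₁ < 0) (hlam₂ : lam₂ < 0)
    (hSP₁ : S.hadamard P₁ ≠ 0) (hSP₂ : S.hadamard P₂ ≠ 0)
    (horder : -lam₁ / frobNorm (S.hadamard P₁) ≤ -lam₂ / frobNorm (S.hadamard P₂)) :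
    sInf {r : ℝ | ∃ Δ : Matrix (Fin m) (Fin p) ℝ, r = frobNorm Δ ∧
        max (lam₁ + sumEntries (P₁.hadamard Δ)) (lam₂ + sumEntries (P₂.hadamard Δ)) = 0 ∧
        (compl' S).hadamard Δ = 0}
      ≤ -lam₁ / frobNorm (S.hadamard P₁) := by
  classical
  -- notation
  set n1 : ℝ := ∑ i, ∑ j, (S.hadamard P₁ i j) ^ 2 with hn1def
  have hn1pos : 0 < n1 := by
    have hex : ∃ i j, S.hadamard P₁ i j ≠ 0 := by
      by_contra h
      push_neg at h
      apply hSP₁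
      ext i j
      simpa using h i j
    obtain ⟨i, j, hij⟩ := hex
    have hinner : 0 < ∑ j, (S.hadamard P₁ i j) ^ 2 :=
      Finset.sum_pos' (fun _ _ => sq_nonneg _)
        ⟨j, Finset.mem_univ j, by positivity⟩
    exact Finset.sum_pos' (fun _ _ => Finset.sum_nonneg fun _ _ => sq_nonneg _)
      ⟨i, Finset.mem_univ i, hinner⟩
  have hc1 : frobNorm (S.hadamard P₁) = Real.sqrt n1 := rfl
  have hc1pos : 0 < frobNorm (S.hadamard P₁) := by
    rw [hc1]; exact Real.sqrt_pos.mpr hn1pos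
  have hc1sq : frobNorm (S.hadamard P₁) ^ 2 = n1 := by
    rw [hc1]; exact Real.sq_sqrt hn1pos.le
  set c₁ : ℝ := frobNorm (S.hadamard P₁) with hc₁def
  have hn2pos : 0 < ∑ i, ∑ j, (S.hadamard P₂ i j) ^ 2 := by
    have hex : ∃ i j, S.hadamard P₂ i j ≠ 0 := by
      by_contra h
      push_neg at h
      apply hSP₂
      ext i j
      simpa using h i j
    obtain ⟨i, j, hij⟩ := hex
    have hinner : 0 < ∑ j, (S.hadamard P₂ i j) ^ 2 :=
      Finset.sum_pos' (fun _ _ => sq_nonneg _)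
        ⟨j, Finset.mem_univ j, by positivity⟩
    exact Finset.sum_pos' (fun _ _ => Finset.sum_nonneg fun _ _ => sq_nonneg _)
      ⟨i, Finset.mem_univ i, hinner⟩
  have hc2pos : 0 < frobNorm (S.hadamard P₂) := Real.sqrt_pos.mpr hn2pos
  set c₂ : ℝ := frobNorm (S.hadamard P₂) with hc₂def
  have hc2sq : c₂ ^ 2 = ∑ i, ∑ j, (S.hadamard P₂ i j) ^ 2 :=
    Real.sq_sqrt hn2pos.le
  -- the candidate perturbation
  set Δ : Matrix (Fin m) (Fin p) ℝ := (-lam₁ / n1) • (S.hadamard P₁) with hΔdef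
  have hΔentry : ∀ i j, Δ i j = (-lam₁ / n1) * (S i j * P₁ i j) := by
    intro i j; simp [hΔdef, Matrix.hadamard]
  have hsumE : ∀ A : Matrix (Fin m) (Fin p) ℝ, sumEntries A = ∑ i, ∑ j, A i j := by
    intro A
    simp [sumEntries, onesVec, Matrix.mulVec, dotProduct]
  -- frobenius norm of Δ
  have hfrob : frobNorm Δ = -lam₁ / c₁ := by
    have h1 : ∀ i j, (Δ i j) ^ 2 = (-lam₁ / n1) ^ 2 * (S.hadamard P₁ i j) ^ 2 := by
      intro i j; rw [hΔentry]; simp [Matrix.hadamard]; ring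
    have h2 : (∑ i, ∑ j, (Δ i j) ^ 2) = (-lam₁ / n1) ^ 2 * n1 := by
      rw [hn1def]
      rw [Finset.mul_sum]
      refine Finset.sum_congr rfl fun i _ => ?_
      rw [Finset.mul_sum]
      exact Finset.sum_congr rfl fun j _ => h1 i j
    have hpos : 0 < -lam₁ / n1 := div_pos (by linarith) hn1pos
    rw [frobNorm, h2, Real.sqrt_mul (sq_nonneg _), Real.sqrt_sq hpos.le, ← hc1]
    rw [← hc1sq]
    field_simp
  -- first constraint holds with equality
  have hsum1 : lam₁ + sumEntries (P₁.hadamard Δ) = 0 := by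
    have hterm : ∀ i j, P₁.hadamard Δ i j = (-lam₁ / n1) * (S.hadamard P₁ i j) ^ 2 := by
      intro i j
      have := hS i j
      simp only [Matrix.hadamard, Matrix.of_apply, hΔentry]
      rcases this with h | h <;> rw [h] <;> ring
    have : sumEntries (P₁.hadamard Δ) = (-lam₁ / n1) * n1 := by
      rw [hsumE, hn1def, Finset.mul_sum]
      refine Finset.sum_congr rfl fun i _ => ?_
      rw [Finset.mul_sum]
      exact Finset.sum_congr rfl fun j _ => hterm i j
    rw [this, div_mul_cancel₀ _ hn1pos.ne']
    ring
  -- second constraint: ≤ 0 via Cauchy-Schwarz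
  have hsum2 : lam₂ + sumEntries (P₂.hadamard Δ) ≤ 0 := by
    have hterm : ∀ i j, P₂.hadamard Δ i j
        = (-lam₁ / n1) * ((S.hadamard P₂ i j) * (S.hadamard P₁ i j)) := by
      intro i j
      have := hS i j
      simp only [Matrix.hadamard, Matrix.of_apply, hΔentry]
      rcases this with h | h <;> rw [h] <;> ring
    have hCS : (∑ i, ∑ j, (S.hadamard P₂ i j) * (S.hadamard P₁ i j)) ≤ c₂ * c₁ := by
      have := Real.sum_mul_le_sqrt_mul_sqrt (Finset.univ : Finset (Fin m × Fin p))
        (fun x => S.hadamard P₂ x.1 x.2) (fun x => S.hadamard P₁ x.1 x.2)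
      simpa [Fintype.sum_prod_type, hc₁def, hc₂def, frobNorm] using this
    have hmul : 0 < -lam₁ / n1 := div_pos (by linarith) hn1pos
    have h1 : sumEntries (P₂.hadamard Δ)
        = (-lam₁ / n1) * ∑ i, ∑ j, (S.hadamard P₂ i j) * (S.hadamard P₁ i j) := by
      rw [hsumE, Finset.mul_sum]
      refine Finset.sum_congr rfl fun i _ => ?_
      rw [Finset.mul_sum]
      exact Finset.sum_congr rfl fun j _ => hterm i j
    have h2 : sumEntries (P₂.hadamard Δ) ≤ (-lam₁ / n1) * (c₂ * c₁) := by
      rw [h1]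
      exact mul_le_mul_of_nonneg_left hCS hmul.le
    have h3 : (-lam₁ / n1) * (c₂ * c₁) = (-lam₁ / c₁) * c₂ := by
      rw [← hc1sq]
      field_simp
    have h4 : (-lam₁ / c₁) * c₂ ≤ -lam₂ := by
      have := mul_le_mul_of_nonneg_right horder hc2pos.le
      rwa [div_mul_cancel₀ _ hc2pos.ne'] at this
    linarith
  -- sparsity constraint
  have hsparse : (compl' S).hadamard Δ = 0 := by
    ext i j
    have := hS i j
    simp only [Matrix.hadamard, compl', Matrix.of_apply, hΔentry, Matrix.zero_apply]
    rcases this with h | h <;> rw [h] <;> ring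
  -- conclude
  have hmem : (-lam₁ / c₁) ∈ {r : ℝ | ∃ Δ : Matrix (Fin m) (Fin p) ℝ, r = frobNorm Δ ∧
      max (lam₁ + sumEntries (P₁.hadamard Δ)) (lam₂ + sumEntries (P₂.hadamard Δ)) = 0 ∧
      (compl' S).hadamard Δ = 0} := by
    refine ⟨Δ, hfrob.symm, ?_, hsparse⟩
    rw [max_eq_left (by rw [hsum1]; exact hsum2), hsum1]
  have hbdd : BddBelow {r : ℝ | ∃ Δ : Matrix (Fin m) (Fin p) ℝ, r = frobNorm Δ ∧
      max (lam₁ + sumEntries (P₁.hadamard Δ)) (lam₂ + sumEntries (P₂.hadamard Δ)) = 0 ∧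
      (compl' S).hadamard Δ = 0} := by
    refine ⟨0, fun r hr => ?_⟩
    obtain ⟨D, hD, -, -⟩ := hr
    rw [hD]
    exact Real.sqrt_nonneg _
  exact csInf_le hbdd hmem
end
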